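/- Let $G$ be a group nilpotent of class at most 2 whose derived subgroup $G'$ consists of elements of finite odd order, with addition defined by $h_1 + h_2 = h_1 h_2 [h_2,h_1]^{1/2}$. Then $(G,+,\cdot)$ is a left brace: for all $a,b,c \in G$, $a(b+c) + a = ab + ac$. -/

import Mathlib

open scoped commutatorElement

/-- The addition `h₁ + h₂ = h₁h₂[h₂,h₁]^{1/2}`, where `r` is a square-root function
on the derived subgroup. -/
def braceAdd {G : Type*} [Group G] (r : G → G) (a b : G) : G := a * b * r ⁅b, a⁆

/-!
Since `G'` is central and its elements have odd order, squaring is injective on `G'`; hence the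
square root `r` is multiplicative on `G'` and `[c,a] · r[a,c] = r[c,a]`. Commutators are bilinear,
so `[a, a(b + c)] = [a,b][a,c]` and `[ac, ab] = [c,a][c,b][a,b]`. Moving the central factors to the
right, both sides of `a(b + c) + a = ab + ac` become `abac` times the same central element.
-/

section

open Subgroup

variable {G : Type*} [Group G]

theorem eq_one_of_sq_eq_one_of_odd_orderOf {g : G} (hg : Odd (orderOf g)) (h : g ^ 2 = 1) :
    g = 1 := by
  rw [← orderOf_eq_one_iff, ← hg.coprime_two_right.orderOf_pow, h, orderOf_one]

theorem Subgroup.eq_of_mul_self_eq_mul_self {H : Subgroup G} [IsMulCommutative H]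
    (hodd : ∀ g ∈ H, Odd (orderOf g)) {x y : G} (hx : x ∈ H) (hy : y ∈ H) (h : x * x = y * y) :
    x = y := by
  have hcomm : Commute x y⁻¹ := setLike_mul_comm hx (inv_mem hy)
  have hsq : (x * y⁻¹) ^ 2 = 1 := by
    rw [hcomm.mul_pow, inv_pow, sq, sq, h, mul_inv_cancel]
  exact mul_inv_eq_one.mp
    (eq_one_of_sq_eq_one_of_odd_orderOf (hodd _ (mul_mem hx (inv_mem hy))) hsq)

def IsSqrtOn (r : G → G) (H : Subgroup G) : Prop :=
  ∀ g ∈ H, r g ∈ H ∧ r g * r g = g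

namespace IsSqrtOn

variable {H : Subgroup G} [IsMulCommutative H] {r : G → G}

theorem map_mul (hr : IsSqrtOn r H) (hodd : ∀ g ∈ H, Odd (orderOf g)) {g h : G} (hg : g ∈ H)
    (hh : h ∈ H) : r (g * h) = r g * r h := by
  obtain ⟨hrg, hgg⟩ := hr g hg
  obtain ⟨hrh, hhh⟩ := hr h hh
  obtain ⟨hrgh, hghgh⟩ := hr _ (mul_mem hg hh)
  have hcomm : Commute (r h) (r g) := setLike_mul_comm hrh hrg
  refine eq_of_mul_self_eq_mul_self hodd hrgh (mul_mem hrg hrh) ?_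
  rw [hghgh, hcomm.mul_mul_mul_comm, hgg, hhh]

theorem map_inv (hr : IsSqrtOn r H) (hodd : ∀ g ∈ H, Odd (orderOf g)) {g : G} (hg : g ∈ H) :
    r g⁻¹ = (r g)⁻¹ := by
  obtain ⟨hrg, hgg⟩ := hr g hg
  refine eq_of_mul_self_eq_mul_self hodd (hr _ (inv_mem hg)).1 (inv_mem hrg) ?_
  rw [(hr _ (inv_mem hg)).2, ← mul_inv_rev, hgg]

theorem mul_map_inv (hr : IsSqrtOn r H) (hodd : ∀ g ∈ H, Odd (orderOf g)) {g : G}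
    (hg : g ∈ H) : g * r g⁻¹ = r g := by
  rw [hr.map_inv hodd hg, mul_inv_eq_iff_eq_mul, (hr g hg).2]

end IsSqrtOn

theorem commutatorElement_mem_commutator (a b : G) : ⁅a, b⁆ ∈ commutator G :=
  commutator_mem_commutator (mem_top a) (mem_top b)

theorem commutator_le_center_iff :
    commutator G ≤ center G ↔ ∀ a b c : G, ⁅⁅a, b⁆, c⁆ = 1 := by
  simp only [commutator_def, commutator_le, mem_top, true_implies, mem_center_iff,
    commutatorElement_eq_one_iff_mul_comm, eq_comm]

theorem commutatorElement_mul_left_of_le_center (hle : commutator G ≤ center G) (a b c : G) :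
    ⁅a * b, c⁆ = ⁅b, c⁆ * ⁅a, c⁆ := by
  rw [commutatorElement_mul_left_eq_conj_mul,
    mem_center_iff.mp (hle (commutatorElement_mem_commutator b c)) a, mul_inv_cancel_right]

theorem commutatorElement_mul_right_of_le_center (hle : commutator G ≤ center G) (a b c : G) :
    ⁅a, b * c⁆ = ⁅a, b⁆ * ⁅a, c⁆ := by
  rw [commutatorElement_mul_right_eq_mul_conj, mul_assoc ⁅a, b⁆,
    mem_center_iff.mp (hle (commutatorElement_mem_commutator a c)) b, ← mul_assoc,
    mul_inv_cancel_right]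

end

/-- If `G` is nilpotent of class at most 2 and every element of `G' = [G,G]` has odd order
(so that `r` picks the unique square root in `G'`), then with the addition
`h₁ + h₂ = h₁h₂[h₂,h₁]^{1/2}` the structure `(G, +, ·)` is a left brace:
`a(b + c) + a = ab + ac` for all `a b c`. -/
theorem stmt1 {G : Type*} [Group G]
    (hclass : ∀ a b c : G, ⁅⁅a, b⁆, c⁆ = 1)
    (hodd : ∀ g ∈ commutator G, Odd (orderOf g))
    (r : G → G)
    (hr : ∀ g ∈ commutator G, r g ∈ commutator G ∧ r g * r g = g) :
    ∀ a b c : G, braceAdd r (a * braceAdd r b c) a = braceAdd r (a * b) (a * c) := by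
  intro a b c
  have hsqrt : IsSqrtOn r (commutator G) := hr
  have hle := commutator_le_center_iff.mpr hclass
  have : IsMulCommutative (commutator G) :=
    Subgroup.le_centralizer_iff_isMulCommutative.mp (hle.trans (Subgroup.center_le_centralizer _))
  have hmem := commutatorElement_mem_commutator (G := G)
  have hleft := commutatorElement_mul_left_of_le_center hle
  have hright := commutatorElement_mul_right_of_le_center hle
  have hcentral (g : G) (hg : g ∈ commutator G) (x : G) : Commute x g :=
    Subgroup.mem_center_iff.mp (hle hg) x
  have hz (x y g : G) : Commute g (r ⁅x, y⁆) := hcentral _ (hr _ (hmem x y)).1 g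
  have h₁ : ⁅a, a * braceAdd r b c⁆ = ⁅a, b⁆ * ⁅a, c⁆ := by
    rw [braceAdd, hright, commutatorElement_self, one_mul, hright, (hz c b a).commutator_eq,
      mul_one, hright]
  have h₂ : ⁅a * c, a * b⁆ = ⁅c, a⁆ * ⁅c, b⁆ * ⁅a, b⁆ := by
    rw [hleft, hright, hright, commutatorElement_self, one_mul]
  have hca : r ⁅c, a⁆ = ⁅c, a⁆ * r ⁅a, c⁆ := by
    rw [← commutatorElement_inv c a, hsqrt.mul_map_inv hodd (hmem c a)]
  rw [braceAdd, braceAdd.eq_1 r (a * b), h₁, h₂, braceAdd,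
    hsqrt.map_mul hodd (hmem a b) (hmem a c),
    hsqrt.map_mul hodd (mul_mem (hmem c a) (hmem c b)) (hmem a b),
    hsqrt.map_mul hodd (hmem c a) (hmem c b), hca]
  calc a * (b * c * r ⁅c, b⁆) * a * (r ⁅a, b⁆ * r ⁅a, c⁆)
      = a * b * c * (r ⁅c, b⁆ * a) * (r ⁅a, b⁆ * r ⁅a, c⁆) := by group
    _ = a * b * (c * a) * (r ⁅c, b⁆ * r ⁅a, b⁆ * r ⁅a, c⁆) := by rw [← (hz c b a).eq]; group
    _ = a * b * (⁅c, a⁆ * (a * c)) * (r ⁅c, b⁆ * r ⁅a, b⁆ * r ⁅a, c⁆) := by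
      rw [commutatorElement_def]; group
    _ = a * b * (a * c) * (⁅c, a⁆ * r ⁅a, c⁆ * r ⁅c, b⁆ * r ⁅a, b⁆) := by
      rw [← (hcentral _ (hmem c a) (a * c)).eq, (hz a c _).eq]; group
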